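/- For every integer d ≥ 2, the variance of D_d is exactly Var(D_d) = d!·(d+2)! / (6·(d+1)^{d−1}·(d+3)^{d−1}) − (d!)² / (d+1)^{2(d−1)}. -/

import Mathlib

open MeasureTheory ProbabilityTheory Real Filter Finset

/-- The Beta(a,b) distribution on ℝ: density x^(a-1)(1-x)^(b-1)/B(a,b) on (0,1),
where B(a,b) = Γ(a)Γ(b)/Γ(a+b). -/
noncomputable def betaMeasureR (a b : ℝ) : Measure ℝ :=
  volume.withDensity fun x =>
    ENNReal.ofReal (if x ∈ Set.Ioo (0 : ℝ) 1 then
      x ^ (a - 1) * (1 - x) ^ (b - 1) / (Real.Gamma a * Real.Gamma b / Real.Gamma (a + b))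
    else 0)

/-- `X` has the Beta(a,b) distribution under `P`. -/
def HasBetaDist {Ω : Type*} [MeasurableSpace Ω] (P : Measure Ω) (X : Ω → ℝ) (a b : ℝ) : Prop :=
  Measurable X ∧ Measure.map X P = betaMeasureR a b


/-!
`D_d` is a product of independent random variables with values in `[0, 1]`, so both `E[D_d]` and
`E[D_d²]` factor into products of one-dimensional moments. Multiplying the `Beta(a, b)` density by
`x ^ n` gives `B(a + n, b) / B(a, b)` times the `Beta(a + n, b)` density, so
`E[X_{d,j}] = (j + 1) / (d + 1)` and `E[X_{d,j}²] = (j + 1)(j + 3) / ((d + 1)(d + 3))`;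
the products of the numerators over `j = 1, …, d - 1` are `d!` and `(d + 2)! / 6`.
-/

open scoped Nat

namespace ProbabilityTheory

lemma iIndepFun.variance_fun_prod {Ω ι : Type*} [MeasurableSpace Ω]
    {P : Measure Ω} [Fintype ι] {Y : ι → Ω → ℝ} (hY : iIndepFun Y P)
    (hm : ∀ i, AEStronglyMeasurable (Y i) P) (hb : ∀ i, ∀ᵐ ω ∂P, |Y i ω| ≤ 1) :
    variance (fun ω => ∏ i, Y i ω) P =
      ∏ i, ∫ ω, Y i ω ^ 2 ∂P - (∏ i, ∫ ω, Y i ω ∂P) ^ 2 := by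
  have := hY.isProbabilityMeasure
  have hL2 : MemLp (fun ω => ∏ i, Y i ω) 2 P := by
    refine MemLp.of_bound (Finset.aestronglyMeasurable_fun_prod _ fun i _ => hm i) 1 ?_
    filter_upwards [ae_all_iff.2 hb] with ω hω
    rw [norm_prod]
    exact prod_le_one (fun _ _ => norm_nonneg _) fun i _ => hω i
  have hY2 : iIndepFun (fun i ω => Y i ω ^ 2) P :=
    hY.comp (fun _ x => x ^ 2) fun _ => by fun_prop
  rw [variance_eq_sub hL2]
  simp only [Pi.pow_apply, ← prod_pow]
  rw [hY2.integral_fun_prod_eq_prod_integral fun i => (hm i).pow 2,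
    hY.integral_fun_prod_eq_prod_integral hm, prod_pow]

section Beta

variable {a b : ℝ}

lemma betaMeasureR_eq_betaMeasure (a b : ℝ) : betaMeasureR a b = betaMeasure a b := by
  unfold betaMeasureR betaMeasure betaPDF betaPDFReal beta
  congr with x
  congr 1
  simp only [Set.mem_Ioo]
  split_ifs <;> ring

lemma betaPDFReal_nonneg (ha : 0 < a) (hb : 0 < b) (x : ℝ) : 0 ≤ betaPDFReal a b x := by
  unfold betaPDFReal
  have := beta_pos ha hb
  split_ifs with hx
  · have : 0 < 1 - x := by linarith [hx.2]
    have := hx.1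
    positivity
  · rfl

lemma measurable_betaPDF (a b : ℝ) : Measurable (betaPDF a b) :=
  (measurable_betaPDFReal a b).ennreal_ofReal

lemma integral_betaPDFReal (ha : 0 < a) (hb : 0 < b) : ∫ x, betaPDFReal a b x = 1 := by
  rw [integral_eq_lintegral_of_nonneg_ae (ae_of_all _ (betaPDFReal_nonneg ha hb))
    (measurable_betaPDFReal a b).aestronglyMeasurable]
  change (∫⁻ x, betaPDF a b x).toReal = 1
  rw [lintegral_betaPDF_eq_one ha hb, ENNReal.toReal_one]

lemma beta_add_one_left (ha : 0 < a) (hb : 0 < b) : beta (a + 1) b = a / (a + b) * beta a b := by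
  have hGb := Gamma_pos_of_pos hb
  have hab := add_pos ha hb
  unfold beta
  rw [add_right_comm, Gamma_add_one ha.ne', Gamma_add_one hab.ne']
  field_simp

lemma pow_mul_betaPDFReal (ha : 0 < a) (hb : 0 < b) (n : ℕ) (x : ℝ) :
    x ^ n * betaPDFReal a b x = beta (a + n) b / beta a b * betaPDFReal (a + n) b x := by
  have := beta_pos ha hb
  have := beta_pos (by positivity : 0 < a + n) hb
  unfold betaPDFReal
  split_ifs with hx
  · rw [add_sub_right_comm, rpow_add hx.1, rpow_natCast]
    field_simp
  · simp

lemma integral_pow_betaMeasure (ha : 0 < a) (hb : 0 < b) (n : ℕ) :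
    ∫ x, x ^ n ∂betaMeasure a b = beta (a + n) b / beta a b := by
  rw [betaMeasure, _root_.integral_withDensity_eq_integral_toReal_smul
    (measurable_betaPDF a b) (ae_of_all _ fun _ => ENNReal.ofReal_lt_top)]
  simp_rw [betaPDF, ENNReal.toReal_ofReal (betaPDFReal_nonneg ha hb _), smul_eq_mul,
    mul_comm _ (_ ^ n), pow_mul_betaPDFReal ha hb]
  rw [integral_const_mul, integral_betaPDFReal (by positivity) hb, mul_one]

lemma integral_id_betaMeasure (ha : 0 < a) (hb : 0 < b) :
    ∫ x, x ∂betaMeasure a b = a / (a + b) := by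
  simpa [beta_add_one_left ha hb, (beta_pos ha hb).ne'] using integral_pow_betaMeasure ha hb 1

lemma integral_sq_betaMeasure (ha : 0 < a) (hb : 0 < b) :
    ∫ x, x ^ 2 ∂betaMeasure a b = a * (a + 1) / ((a + b) * (a + b + 1)) := by
  have h2 : a + ((2 : ℕ) : ℝ) = a + 1 + 1 := by push_cast; ring
  rw [integral_pow_betaMeasure ha hb 2, h2, beta_add_one_left (by positivity) hb,
    beta_add_one_left ha hb, add_right_comm a 1 b]
  have := beta_pos ha hb
  have : 0 < a + b := by positivity
  field_simp

lemma ae_mem_Ioo_betaMeasure : ∀ᵐ x ∂betaMeasure a b, x ∈ Set.Ioo 0 1 := by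
  refine (ae_withDensity_iff (measurable_betaPDF a b)).2 (ae_of_all _ fun x hx => ?_)
  by_contra hx'
  rcases not_and_or.1 hx' with h0 | h1
  · exact hx (betaPDF_eq_zero_of_nonpos (not_lt.1 h0))
  · exact hx (betaPDF_eq_zero_of_one_le (not_lt.1 h1))

end Beta

end ProbabilityTheory

section HasBetaDist

variable {Ω : Type*} [MeasurableSpace Ω] {P : Measure Ω} {X : Ω → ℝ} {a b : ℝ}

lemma HasBetaDist.ae_mem_Ioo (h : HasBetaDist P X a b) : ∀ᵐ ω ∂P, X ω ∈ Set.Ioo 0 1 :=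
  ae_of_ae_map h.1.aemeasurable <| by
    rw [h.2, betaMeasureR_eq_betaMeasure]
    exact ae_mem_Ioo_betaMeasure

lemma HasBetaDist.integral_pow (h : HasBetaDist P X a b) (n : ℕ) :
    ∫ ω, X ω ^ n ∂P = ∫ x, x ^ n ∂betaMeasure a b := by
  rw [← betaMeasureR_eq_betaMeasure, ← h.2, integral_map h.1.aemeasurable (by fun_prop)]

lemma HasBetaDist.integral_eq (h : HasBetaDist P X a b) (ha : 0 < a) (hb : 0 < b) :
    ∫ ω, X ω ∂P = a / (a + b) := by
  simpa [integral_id_betaMeasure ha hb] using h.integral_pow 1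

lemma HasBetaDist.integral_sq (h : HasBetaDist P X a b) (ha : 0 < a) (hb : 0 < b) :
    ∫ ω, X ω ^ 2 ∂P = a * (a + 1) / ((a + b) * (a + b + 1)) := by
  rw [h.integral_pow 2, integral_sq_betaMeasure ha hb]

lemma HasBetaDist.ae_abs_le_one (h : HasBetaDist P X a b) : ∀ᵐ ω ∂P, |X ω| ≤ 1 :=
  h.ae_mem_Ioo.mono fun _ hω => abs_le.2 ⟨by linarith [hω.1], hω.2.le⟩

lemma HasBetaDist.integral_half_params {j d : ℝ}
    (h : HasBetaDist P X ((j + 1) / 2) ((d - j) / 2)) (hj : -1 < j) (hjd : j < d) :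
    ∫ ω, X ω ∂P = (j + 1) / (d + 1) := by
  rw [h.integral_eq (by linarith) (by linarith),
    show (j + 1) / 2 + (d - j) / 2 = (d + 1) / 2 by ring]
  have : 0 < d + 1 := by linarith
  field_simp

lemma HasBetaDist.integral_sq_half_params {j d : ℝ}
    (h : HasBetaDist P X ((j + 1) / 2) ((d - j) / 2)) (hj : -1 < j) (hjd : j < d) :
    ∫ ω, X ω ^ 2 ∂P = (j + 1) / (d + 1) * ((j + 3) / (d + 3)) := by
  rw [h.integral_sq (by linarith) (by linarith),
    show (j + 1) / 2 + (d - j) / 2 = (d + 1) / 2 by ring]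
  have : 0 < d + 1 := by linarith
  have : 0 < d + 3 := by linarith
  field_simp
  ring

end HasBetaDist

theorem Nat.factorial_mul_prod_Icc_add (k n : ℕ) :
    k ! * ∏ j ∈ Icc 1 n, (j + k) = (n + k)! := by
  induction n with
  | zero => simp
  | succ n ih =>
    rw [prod_Icc_succ_top (by omega), ← mul_assoc, ih, add_right_comm, Nat.factorial_succ,
      mul_comm]

lemma prod_Icc_add_div (k n : ℕ) (c : ℝ) :
    ∏ j ∈ Icc 1 n, (((j : ℝ) + k) / c) = (n + k)! / k ! / c ^ n := by
  have hprod : ∏ j ∈ Icc 1 n, ((j : ℝ) + k) = (n + k)! / k ! := by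
    rw [eq_div_iff (by positivity), mul_comm]
    exact_mod_cast Nat.factorial_mul_prod_Icc_add k n
  rw [prod_div_distrib, prod_const, Nat.card_Icc, Nat.add_sub_cancel, hprod]

theorem stmt10_general
    {Ω : Type*} [MeasurableSpace Ω] (P : Measure Ω)
    (X : ℕ → ℕ → Ω → ℝ)
    (hindep : ∀ d : ℕ, 2 ≤ d →
      iIndepFun
        (fun j : {j : ℕ // 1 ≤ j ∧ j ≤ d - 1} => X d j) P)
    (hX : ∀ d j : ℕ, 2 ≤ d → 1 ≤ j → j ≤ d - 1 →
      HasBetaDist P (X d j) (((j : ℝ) + 1) / 2) (((d : ℝ) - (j : ℝ)) / 2)) :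
    ∀ d : ℕ, 2 ≤ d →
      variance (fun ω => (∏ j ∈ Finset.Icc 1 (d - 1), X d j ω)) P =
        (Nat.factorial d : ℝ) * (Nat.factorial (d + 2) : ℝ) /
          (6 * ((d : ℝ) + 1) ^ (d - 1) * ((d : ℝ) + 3) ^ (d - 1)) -
        (Nat.factorial d : ℝ) ^ 2 / ((d : ℝ) + 1) ^ (2 * (d - 1)) := by
  intro d hd
  have hmem (j : ℕ) : j ∈ Icc 1 (d - 1) ↔ 1 ≤ j ∧ j ≤ d - 1 := mem_Icc
  let : Fintype {j : ℕ // 1 ≤ j ∧ j ≤ d - 1} := Fintype.ofFinset _ hmem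
  have hβ (j : {j : ℕ // 1 ≤ j ∧ j ≤ d - 1}) := hX d j hd j.2.1 j.2.2
  have hj (j : {j : ℕ // 1 ≤ j ∧ j ≤ d - 1}) : -1 < (j : ℝ) :=
    neg_one_lt_zero.trans_le j.1.cast_nonneg
  have hjd (j : {j : ℕ // 1 ≤ j ∧ j ≤ d - 1}) : (j : ℝ) < d := by
    exact_mod_cast (by omega : (j : ℕ) < d)
  have h1 := prod_Icc_add_div 1 (d - 1) ((d : ℝ) + 1)
  have h3 := prod_Icc_add_div 3 (d - 1) ((d : ℝ) + 3)
  rw [Nat.sub_add_cancel (by omega), Nat.factorial_one] at h1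
  rw [show d - 1 + 3 = d + 2 by omega] at h3
  push_cast at h1 h3
  simp_rw [prod_subtype _ hmem (X d · _)]
  rw [(hindep d hd).variance_fun_prod (fun j => (hβ j).1.aestronglyMeasurable)
      fun j => (hβ j).ae_abs_le_one,
    Fintype.prod_congr _ _ fun j => (hβ j).integral_half_params (hj j) (hjd j),
    Fintype.prod_congr _ _ fun j => (hβ j).integral_sq_half_params (hj j) (hjd j),
    ← prod_subtype _ hmem fun j : ℕ => ((j : ℝ) + 1) / ((d : ℝ) + 1),
    ← prod_subtype _ hmem fun j : ℕ => ((j : ℝ) + 1) / ((d : ℝ) + 1) *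
      (((j : ℝ) + 3) / ((d : ℝ) + 3)),
    prod_mul_distrib, h1, h3, show (3 : ℕ)! = 6 from rfl, pow_mul']
  push_cast
  ring

theorem stmt10
    {Ω : Type*} [MeasurableSpace Ω] (P : Measure Ω) [IsProbabilityMeasure P]
    (X : ℕ → ℕ → Ω → ℝ)
    (hindep : ∀ d : ℕ, 2 ≤ d →
      iIndepFun
        (fun j : {j : ℕ // 1 ≤ j ∧ j ≤ d - 1} => X d j) P)
    (hX : ∀ d j : ℕ, 2 ≤ d → 1 ≤ j → j ≤ d - 1 →
      HasBetaDist P (X d j) (((j : ℝ) + 1) / 2) (((d : ℝ) - (j : ℝ)) / 2)) :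
    ∀ d : ℕ, 2 ≤ d →
      variance (fun ω => (∏ j ∈ Finset.Icc 1 (d - 1), X d j ω)) P =
        (Nat.factorial d : ℝ) * (Nat.factorial (d + 2) : ℝ) /
          (6 * ((d : ℝ) + 1) ^ (d - 1) * ((d : ℝ) + 3) ^ (d - 1)) -
        (Nat.factorial d : ℝ) ^ 2 / ((d : ℝ) + 1) ^ (2 * (d - 1)) :=
  stmt10_general P X hindep hX
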